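/- With h(λ) = g_λ(2λ/3) as above, h is continuous on (0,1), lim_{λ→0+} h(λ) = -1, lim_{λ→1-} h(λ) = H(2/3) - 1/3 > 0, and h is strictly concave; consequently, the equation h(λ) = 0 has a unique solution λ₀ in (0,1). -/

import Mathlib

/-- The binary entropy function. -/
noncomputable def binEnt (x : ℝ) : ℝ := -x * Real.logb 2 x - (1 - x) * Real.logb 2 (1 - x)

/-- `g_λ(α) = H(α) + (1-α)(H((λ-α)/(1-α)) - 1)`. -/
noncomputable def gFun (l a : ℝ) : ℝ := binEnt a + (1 - a) * (binEnt ((l - a) / (1 - a)) - 1)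

/-- `h(λ) = g_λ(2λ/3)`. -/
noncomputable def hFun (l : ℝ) : ℝ := gFun l (2 * l / 3)

/-!
Because `α = 2λ/3` keeps the ratio `α/λ = 2/3` fixed, the grouping property of entropy,
`H(α) + (1-α) H((λ-α)/(1-α)) = H(λ) + λ H(α/λ)`, turns `h` into
`H(λ) + λ (H(2/3) + 2/3) - 1` on `(0,1)`. This is continuous and strictly concave on `[0,1]`,
equal to `-1` at `0` and to `H(2/3) - 1/3 = log₂ 3 - 1 > 0` at `1`. A concave function on `[a,b]`
that is negative at `a` and positive at `b` has exactly one zero in between: a second zero would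
force the value at `b` to be `≤ 0`.
-/

open Real Set Filter

lemma binEnt_eq_binEntropy_div (x : ℝ) : binEnt x = binEntropy x / log 2 := by
  simp only [binEnt, binEntropy, logb, log_inv]
  ring

lemma mul_binEntropy_div {c : ℝ} (hc : c ≠ 0) (x : ℝ) :
    c * binEntropy (x / c) = negMulLog x + negMulLog (c - x) - negMulLog c := by
  have hx : negMulLog x = negMulLog (c * (x / c)) := by rw [mul_div_cancel₀ _ hc]
  have hcx : negMulLog (c - x) = negMulLog (c * (1 - x / c)) := by
    rw [mul_one_sub, mul_div_cancel₀ _ hc]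
  rw [binEntropy_eq_negMulLog_add_negMulLog_one_sub, hx, hcx, negMulLog_mul, negMulLog_mul]
  ring

/-- Grouping property of entropy: both sides are the entropy of `(α, λ - α, 1 - λ)`. -/
lemma binEntropy_add_mul_binEntropy_eq {a l : ℝ} (ha : 1 - a ≠ 0) (hl : l ≠ 0) :
    binEntropy a + (1 - a) * binEntropy ((l - a) / (1 - a)) =
      binEntropy l + l * binEntropy (a / l) := by
  rw [mul_binEntropy_div ha, mul_binEntropy_div hl,
    binEntropy_eq_negMulLog_add_negMulLog_one_sub,
    binEntropy_eq_negMulLog_add_negMulLog_one_sub l, show 1 - a - (l - a) = 1 - l by ring]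
  ring

lemma StrictConcaveOn.div_const {E : Type*} [AddCommMonoid E] [Module ℝ E] {s : Set E}
    {f : E → ℝ} (hf : StrictConcaveOn ℝ s f) {c : ℝ} (hc : 0 < c) :
    StrictConcaveOn ℝ s fun x => f x / c := by
  refine ⟨hf.1, fun x hx y hy hxy a b ha hb hab => ?_⟩
  calc a • (f x / c) + b • (f y / c) = (a • f x + b • f y) / c := by
        simp only [smul_eq_mul]; ring
    _ < f (a • x + b • y) / c := div_lt_div_of_pos_right (hf.2 hx hy hxy ha hb hab) hc

lemma ConcaveOn.existsUnique_eq_zero {f : ℝ → ℝ} {a b : ℝ} (hab : a ≤ b)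
    (hcont : ContinuousOn f (Icc a b))
    (hconc : ConcaveOn ℝ (Icc a b) f) (ha : f a < 0) (hb : 0 < f b) :
    ∃! x, x ∈ Ioo a b ∧ f x = 0 := by
  obtain ⟨x, hx, hfx⟩ := intermediate_value_Ioo hab hcont ⟨ha, hb⟩
  refine ⟨x, ⟨hx, hfx⟩, fun y ⟨hy, hfy⟩ => ?_⟩
  have hbmem : b ∈ Icc a b := right_mem_Icc.2 hab
  have no_later_zero : ∀ w ∈ Ioo a b, ∀ z ∈ Ioo a b, f w = 0 → f z = 0 → ¬ w < z :=
    fun w hw z hz hfw hfz hwz => hb.not_ge <| hfz ▸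
      hconc.right_le_of_le_left'' (Ioo_subset_Icc_self hw) hbmem hwz hz.2.le (by rw [hfw, hfz])
  rcases lt_trichotomy y x with h | h | h
  · exact absurd h (no_later_zero y hy x hx hfy hfx)
  · exact h
  · exact absurd h (no_later_zero x hx y hy hfx hfy)

noncomputable def hFunExt (l : ℝ) : ℝ := binEnt l + l * (binEnt (2 / 3) + 2 / 3) - 1

lemma hFun_eq_hFunExt {l : ℝ} (hl : l ≠ 0) (hl' : l ≠ 3 / 2) : hFun l = hFunExt l := by
  have hα : 1 - 2 * l / 3 ≠ 0 := by
    contrapose! hl'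
    linarith
  have grouping := binEntropy_add_mul_binEntropy_eq hα hl
  rw [show 2 * l / 3 / l = 2 / 3 by field_simp] at grouping
  simp only [hFun, gFun, hFunExt, binEnt_eq_binEntropy_div]
  linear_combination (log 2)⁻¹ * grouping

lemma continuous_hFunExt : Continuous hFunExt := by
  unfold hFunExt
  simp only [funext binEnt_eq_binEntropy_div]
  fun_prop

lemma hFunExt_zero : hFunExt 0 = -1 := by simp [hFunExt, binEnt]

lemma hFunExt_one : hFunExt 1 = binEnt (2 / 3) - 1 / 3 := by
  simp [hFunExt, binEnt]
  ring

lemma strictConcaveOn_hFunExt : StrictConcaveOn ℝ (Icc 0 1) hFunExt := by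
  have hH : StrictConcaveOn ℝ (Icc 0 1) binEnt := by
    simpa only [← binEnt_eq_binEntropy_div] using
      strictConcave_binEntropy.div_const (log_pos one_lt_two)
  refine hH.add_concaveOn ⟨convex_Icc 0 1, fun x _ y _ a b _ _ hab => le_of_eq ?_⟩ |>.congr
    fun l _ => (add_sub_assoc _ _ _).symm
  simp only [smul_eq_mul]
  linear_combination (-1 : ℝ) * hab

lemma binEnt_two_thirds : binEnt (2 / 3) = logb 2 3 - 2 / 3 := by
  rw [binEnt, show (1 : ℝ) - 2 / 3 = 3⁻¹ by norm_num, logb_inv,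
    logb_div (by norm_num) (by norm_num), logb_self_eq_one one_lt_two]
  ring

lemma one_third_lt_binEnt_two_thirds : 1 / 3 < binEnt (2 / 3) := by
  rw [binEnt_two_thirds]
  have : logb 2 2 < logb 2 3 := logb_lt_logb one_lt_two two_pos (by norm_num)
  rw [logb_self_eq_one one_lt_two] at this
  linarith

/-- `h` is continuous on `(0,1)`, tends to `-1` at `0⁺` and to
`H(2/3) - 1/3 > 0` at `1⁻`, is strictly concave, and consequently the
equation `h(λ) = 0` has a unique solution in `(0,1)`. -/
theorem hFun_unique_root :
    ContinuousOn hFun (Set.Ioo (0 : ℝ) 1) ∧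
    Filter.Tendsto hFun (nhdsWithin 0 (Set.Ioi 0)) (nhds (-1)) ∧
    Filter.Tendsto hFun (nhdsWithin 1 (Set.Iio 1)) (nhds (binEnt (2 / 3) - 1 / 3)) ∧
    0 < binEnt (2 / 3) - 1 / 3 ∧
    StrictConcaveOn ℝ (Set.Ioo (0 : ℝ) 1) hFun ∧
    ∃! l : ℝ, l ∈ Set.Ioo (0 : ℝ) 1 ∧ hFun l = 0 := by
  have hFun_eqOn : EqOn hFunExt hFun (Ioo 0 1) := fun l hl =>
    (hFun_eq_hFunExt hl.1.ne' (by linarith [hl.2])).symm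
  have hpos := sub_pos.2 one_third_lt_binEnt_two_thirds
  refine ⟨continuous_hFunExt.continuousOn.congr hFun_eqOn.symm, ?_, ?_, hpos,
    (strictConcaveOn_hFunExt.subset Ioo_subset_Icc_self (convex_Ioo 0 1)).congr hFun_eqOn, ?_⟩
  · rw [← hFunExt_zero]
    exact (continuous_hFunExt.tendsto 0).mono_left nhdsWithin_le_nhds |>.congr'
      (eventuallyEq_of_mem (Ioo_mem_nhdsGT one_pos) hFun_eqOn)
  · rw [← hFunExt_one]
    exact (continuous_hFunExt.tendsto 1).mono_left nhdsWithin_le_nhds |>.congr'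
      (eventuallyEq_of_mem (Ioo_mem_nhdsLT one_pos) hFun_eqOn)
  · refine (existsUnique_congr fun l => and_congr_right fun hl => ?_).1
      (strictConcaveOn_hFunExt.concaveOn.existsUnique_eq_zero zero_le_one
      continuous_hFunExt.continuousOn (by rw [hFunExt_zero]; norm_num) (hFunExt_one ▸ hpos))
    rw [hFun_eqOn hl]
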